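/- arXiv:1606.06143 — 3 statements merged into one kernel-verified Lean document; each statement's English description precedes it below -/
import Mathlib

section
/- For a standard Gaussian Z and f continuous with polynomial growth, the function φ(μ,σ) = E[f(μ+σZ)] satisfies ∂φ/∂σ = E[f(μ+σZ)(Z²-1)/σ] for σ > 0. -/
open MeasureTheory ProbabilityTheory Real
open scoped ENNReal NNReal

/-- Integrability of a continuous function of polynomial growth against a Gaussian. -/
lemma integrable_mul_gauss {b : ℝ} (hb : 0 < b) {g : ℝ → ℝ} (hg : Continuous g)
    (R K : ℝ) (n : ℕ) (hgr : ∀ x : ℝ, R ≤ |x| → |g x| ≤ K * |x| ^ n) :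
    Integrable fun x => g x * Real.exp (-b * x ^ 2) := by
  obtain ⟨M, hM⟩ := (isCompact_Icc (a := -R) (b := R)).exists_bound_of_continuousOn
    hg.continuousOn
  have hpow : Integrable fun x : ℝ => |x| ^ n * Real.exp (-b * x ^ 2) := by
    have h1 : Integrable fun x : ℝ => x ^ (n : ℝ) * Real.exp (-b * x ^ 2) :=
      integrable_rpow_mul_exp_neg_mul_sq hb (lt_of_lt_of_le (by norm_num) (Nat.cast_nonneg n))
    refine h1.abs.congr (Filter.Eventually.of_forall fun x => ?_)
    simp [Real.rpow_natCast, abs_mul, abs_pow, abs_of_nonneg (Real.exp_pos _).le]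
  have hbound : Integrable fun x : ℝ =>
      (|M| + |K|) * ((1 + |x| ^ n) * Real.exp (-b * x ^ 2)) := by
    refine Integrable.const_mul ?_ _
    have := (integrable_exp_neg_mul_sq hb).add hpow
    refine this.congr (Filter.Eventually.of_forall fun x => ?_)
    simp only [Pi.add_apply]
    ring
  refine hbound.mono' ((hg.mul (by continuity)).aestronglyMeasurable)
    (Filter.Eventually.of_forall fun x => ?_)
  rw [norm_mul, Real.norm_eq_abs, Real.norm_eq_abs, abs_of_nonneg (Real.exp_pos _).le]
  have hexp : (0:ℝ) < Real.exp (-b * x ^ 2) := Real.exp_pos _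
  have h1n : (1:ℝ) ≤ 1 + |x| ^ n := by linarith [pow_nonneg (abs_nonneg x) n]
  by_cases hx : R ≤ |x|
  · have h1 := hgr x hx
    have h2 : |g x| ≤ |K| * (1 + |x| ^ n) := by
      refine h1.trans ?_
      have : K * |x| ^ n ≤ |K| * |x| ^ n :=
        mul_le_mul_of_nonneg_right (le_abs_self K) (by positivity)
      refine this.trans ?_
      have : |x| ^ n ≤ 1 + |x| ^ n := by linarith [abs_nonneg x]
      exact mul_le_mul_of_nonneg_left this (abs_nonneg K)
    have h3 : |K| * (1 + |x| ^ n) ≤ (|M| + |K|) * (1 + |x| ^ n) := by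
      have : |K| ≤ |M| + |K| := le_add_of_nonneg_left (abs_nonneg M)
      exact mul_le_mul_of_nonneg_right this (by linarith)
    calc |g x| * Real.exp (-b * x ^ 2)
        ≤ (|M| + |K|) * (1 + |x| ^ n) * Real.exp (-b * x ^ 2) :=
          mul_le_mul_of_nonneg_right (h2.trans h3) hexp.le
      _ = (|M| + |K|) * ((1 + |x| ^ n) * Real.exp (-b * x ^ 2)) := by ring
  · push_neg at hx
    have hxI : x ∈ Set.Icc (-R) R := by
      constructor <;> [linarith [neg_abs_le x]; linarith [le_abs_self x]]
    have h1 : |g x| ≤ |M| := (hM x hxI).trans (le_abs_self M)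
    have h2 : |M| ≤ (|M| + |K|) * (1 + |x| ^ n) := by
      nlinarith [abs_nonneg M, abs_nonneg K, pow_nonneg (abs_nonneg x) n]
    calc |g x| * Real.exp (-b * x ^ 2)
        ≤ (|M| + |K|) * (1 + |x| ^ n) * Real.exp (-b * x ^ 2) :=
          mul_le_mul_of_nonneg_right (h1.trans h2) hexp.le
      _ = (|M| + |K|) * ((1 + |x| ^ n) * Real.exp (-b * x ^ 2)) := by ring

lemma integral_gaussianReal_std (h : ℝ → ℝ) :
    ∫ z, h z ∂(gaussianReal 0 1) = ∫ z, gaussianPDFReal 0 1 z * h z := by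
  rw [gaussianReal_of_var_ne_zero _ one_ne_zero]
  have hpdf : gaussianPDF 0 1 = fun x => ((gaussianPDFReal 0 1 x).toNNReal : ℝ≥0∞) := rfl
  rw [hpdf, integral_withDensity_eq_integral_smul
    (by exact (measurable_gaussianPDFReal 0 1).real_toNNReal) h]
  congr 1 with z
  rw [NNReal.smul_def, smul_eq_mul, Real.coe_toNNReal _ (gaussianPDFReal_nonneg 0 1 z)]

lemma hasDerivAt_gauss_kernel (y : ℝ) {s : ℝ} (hs : 0 < s) :
    HasDerivAt (fun t : ℝ => t⁻¹ * Real.exp (-y ^ 2 / (2 * t ^ 2)))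
      ((y ^ 2 / s ^ 4 - 1 / s ^ 2) * Real.exp (-y ^ 2 / (2 * s ^ 2))) s := by
  have hs2 : (2 : ℝ) * s ^ 2 ≠ 0 := by positivity
  have hw : HasDerivAt (fun t : ℝ => -y ^ 2 / (2 * t ^ 2)) (y ^ 2 / s ^ 3) s := by
    have h1 : HasDerivAt (fun t : ℝ => 2 * t ^ 2) (2 * (2 * s ^ 1)) s :=
      (hasDerivAt_pow 2 s).const_mul 2
    have h2 := (h1.inv hs2).const_mul (-y ^ 2)
    have : ∀ t : ℝ, -y ^ 2 * (2 * t ^ 2)⁻¹ = -y ^ 2 / (2 * t ^ 2) := fun t => by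
      rw [div_eq_mul_inv]
    refine (h2.congr_deriv ?_).congr_of_eventuallyEq
      (Filter.Eventually.of_forall fun t => (this t).symm) |>.congr_deriv rfl
    field_simp
  have he := hw.exp
  have hi : HasDerivAt (fun t : ℝ => t⁻¹) (-(s ^ 2)⁻¹) s := hasDerivAt_inv hs.ne'
  have := hi.mul he
  refine this.congr_deriv ?_
  field_simp
  ring

set_option maxHeartbeats 1000000 in
/-- Likelihood ratio identity in `σ`: for continuous `f` of polynomial growth,
`∂/∂σ E[f(μ+σZ)] = E[f(μ+σZ)(Z²-1)]/σ` for `σ > 0`, where the expectation is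
written through the `N(μ,σ²)` density. -/
theorem stmt_12 (μ σ : ℝ) (hσ : 0 < σ) (f : ℝ → ℝ) (hf : Continuous f)
    (C m : ℝ) (hgrowth : ∀ x : ℝ, |f x| ≤ C * (1 + |x| ^ m)) :
    deriv (fun s : ℝ => ∫ x, f x *
        ((2 * π * s ^ 2) ^ (-(1 : ℝ) / 2) *
          Real.exp (-(x - μ) ^ 2 / (2 * s ^ 2)))) σ
      = (∫ z, f (μ + σ * z) * (z ^ 2 - 1) ∂(gaussianReal 0 1)) / σ := by
  have h2π : (0:ℝ) < 2 * π := by positivity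
  set c : ℝ := (2 * π) ^ (-(1:ℝ)/2) with hc_def
  have hc : 0 < c := Real.rpow_pos_of_pos h2π _
  -- rewrite the rpow of the full expression
  have hrpow : ∀ s : ℝ, 0 < s → (2 * π * s ^ 2) ^ (-(1:ℝ)/2) = c * s⁻¹ := by
    intro s hs
    rw [Real.mul_rpow h2π.le (sq_nonneg s)]
    congr 1
    rw [← Real.rpow_natCast s 2, ← Real.rpow_mul hs.le]
    norm_num
    exact Real.rpow_neg_one s
  set F : ℝ → ℝ → ℝ := fun s x =>
    f x * c * (s⁻¹ * Real.exp (-(x - μ) ^ 2 / (2 * s ^ 2))) with hF_def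
  set F' : ℝ → ℝ → ℝ := fun s x =>
    f x * c * (((x - μ) ^ 2 / s ^ 4 - 1 / s ^ 2) *
      Real.exp (-(x - μ) ^ 2 / (2 * s ^ 2))) with hF'_def
  have hev : (fun s : ℝ => ∫ x, f x * ((2 * π * s ^ 2) ^ (-(1 : ℝ) / 2) *
      Real.exp (-(x - μ) ^ 2 / (2 * s ^ 2)))) =ᶠ[nhds σ] fun s => ∫ x, F s x := by
    filter_upwards [lt_mem_nhds hσ] with s hs
    refine integral_congr_ae (Filter.Eventually.of_forall fun x => ?_)
    rw [hrpow s hs]; simp only [hF_def]; ring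
  rw [hev.deriv_eq]
  -- growth preparation
  have hC : 0 ≤ C := by
    have h1 := hgrowth 1
    have h0 := abs_nonneg (f 1)
    rw [abs_one, Real.one_rpow] at h1
    linarith
  set n₀ : ℕ := ⌈max m 0⌉₊ with hn₀
  have key : ∀ y : ℝ, 1 + |μ| ≤ |y| → |f (y + μ)| ≤ C * (1 + 2 ^ n₀) * |y| ^ n₀ := by
    intro y hy
    have h6 : (1:ℝ) ≤ |y| := by linarith [abs_nonneg μ]
    have h1 : (1:ℝ) ≤ |y + μ| := by
      have h := abs_add_le (y + μ) (-μ)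
      rw [add_neg_cancel_right, abs_neg] at h
      linarith
    have h2 : |y + μ| ^ m ≤ |y + μ| ^ (n₀ : ℝ) :=
      Real.rpow_le_rpow_of_exponent_le h1 ((le_max_left m 0).trans (Nat.le_ceil _))
    have h3 : |y + μ| ^ (n₀ : ℝ) = |y + μ| ^ n₀ := Real.rpow_natCast _ _
    have h4 : |y + μ| ≤ 2 * |y| := by
      have := abs_add_le y μ
      have hμy : |μ| ≤ |y| := by linarith
      linarith
    have h5 : |y + μ| ^ n₀ ≤ 2 ^ n₀ * |y| ^ n₀ := by
      rw [← mul_pow]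
      exact pow_le_pow_left₀ (abs_nonneg _) h4 n₀
    have h7 : (1:ℝ) ≤ |y| ^ n₀ := by
      calc (1:ℝ) = 1 ^ n₀ := (one_pow n₀).symm
        _ ≤ |y| ^ n₀ := pow_le_pow_left₀ zero_le_one h6 n₀
    calc |f (y + μ)| ≤ C * (1 + |y + μ| ^ m) := hgrowth _
      _ ≤ C * (1 + 2 ^ n₀ * |y| ^ n₀) := by
          refine mul_le_mul_of_nonneg_left ?_ hC
          have := h2.trans_eq h3
          linarith [this.trans h5]
      _ ≤ C * (1 + 2 ^ n₀) * |y| ^ n₀ := by nlinarith [pow_pos (two_pos (α := ℝ)) n₀]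
  -- integrability of F σ
  have hFσ_int : Integrable (F σ) := by
    have hint : Integrable fun y : ℝ => (f (y + μ) * (c * σ⁻¹)) *
        Real.exp (-(2 * σ ^ 2)⁻¹ * y ^ 2) := by
      refine integrable_mul_gauss (by positivity)
        (by fun_prop : Continuous fun y : ℝ => f (y + μ) * (c * σ⁻¹))
        (1 + |μ|) (C * (1 + 2 ^ n₀) * (c * σ⁻¹)) n₀ fun y hy => ?_
      rw [abs_mul, abs_of_pos (by positivity : (0:ℝ) < c * σ⁻¹)]
      calc |f (y + μ)| * (c * σ⁻¹) ≤ (C * (1 + 2 ^ n₀) * |y| ^ n₀) * (c * σ⁻¹) :=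
            mul_le_mul_of_nonneg_right (key y hy) (by positivity)
        _ = C * (1 + 2 ^ n₀) * (c * σ⁻¹) * |y| ^ n₀ := by ring
    refine (hint.comp_sub_right μ).congr (Filter.Eventually.of_forall fun x => ?_)
    simp only [sub_add_cancel, hF_def]
    rw [show -(2 * σ ^ 2)⁻¹ * (x - μ) ^ 2 = -(x - μ) ^ 2 / (2 * σ ^ 2) by ring]
    ring
  -- the bound
  set A : ℝ := 16 / σ ^ 4 + 4 / σ ^ 2 with hA
  have hApos : 0 < A := by positivity
  set bound : ℝ → ℝ := fun x => |f x| * (c * A) * ((x - μ) ^ 2 + 1) *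
    Real.exp (-(2 / (9 * σ ^ 2)) * (x - μ) ^ 2) with hbound_def
  have h_bound : ∀ x : ℝ, ∀ s ∈ Metric.ball σ (σ / 2), ‖F' s x‖ ≤ bound x := by
    intro x s hsball
    rw [Metric.mem_ball, Real.dist_eq, abs_sub_lt_iff] at hsball
    have hs1 : σ / 2 < s := by linarith [hsball.2]
    have hs2 : s < 3 * σ / 2 := by linarith [hsball.1]
    have hs0 : 0 < s := by linarith
    have hs4 : σ ^ 4 / 16 ≤ s ^ 4 := by
      have := pow_le_pow_left₀ (by positivity : (0:ℝ) ≤ σ / 2) hs1.le 4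
      calc σ ^ 4 / 16 = (σ / 2) ^ 4 := by ring
        _ ≤ s ^ 4 := this
    have hinv4 : 1 / s ^ 4 ≤ 16 / σ ^ 4 := by
      rw [div_le_div_iff₀ (by positivity) (by positivity)]; nlinarith
    have hinv2 : 1 / s ^ 2 ≤ 4 / σ ^ 2 := by
      rw [div_le_div_iff₀ (by positivity) (by positivity)]; nlinarith
    have hD : |(x - μ) ^ 2 / s ^ 4 - 1 / s ^ 2| ≤ A * ((x - μ) ^ 2 + 1) := by
      rw [abs_sub_comm]
      refine (abs_sub _ _).trans ?_
      rw [abs_of_nonneg (by positivity : (0:ℝ) ≤ 1 / s ^ 2),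
        abs_of_nonneg (by positivity : (0:ℝ) ≤ (x - μ) ^ 2 / s ^ 4)]
      have e1 : (x - μ) ^ 2 / s ^ 4 = (x - μ) ^ 2 * (1 / s ^ 4) := by ring
      have e2 : (x - μ) ^ 2 * (1 / s ^ 4) ≤ (x - μ) ^ 2 * (16 / σ ^ 4) :=
        mul_le_mul_of_nonneg_left hinv4 (sq_nonneg _)
      have t1 : (x - μ) ^ 2 / s ^ 4 ≤ (x - μ) ^ 2 * (16 / σ ^ 4) := e1 ▸ e2
      have t2 : (0:ℝ) ≤ (x - μ) ^ 2 * (4 / σ ^ 2) := by positivity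
      have t3 : (0:ℝ) ≤ 16 / σ ^ 4 := by positivity
      have expand : A * ((x - μ) ^ 2 + 1) =
          (x - μ) ^ 2 * (16 / σ ^ 4) + 16 / σ ^ 4 + (x - μ) ^ 2 * (4 / σ ^ 2) + 4 / σ ^ 2 := by
        rw [hA]; ring
      rw [expand]
      linarith
    have hE : Real.exp (-(x - μ) ^ 2 / (2 * s ^ 2)) ≤
        Real.exp (-(2 / (9 * σ ^ 2)) * (x - μ) ^ 2) := by
      rw [Real.exp_le_exp]
      have hdiv : 2 / (9 * σ ^ 2) ≤ 1 / (2 * s ^ 2) := by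
        rw [div_le_div_iff₀ (by positivity) (by positivity)]; nlinarith
      have := mul_le_mul_of_nonneg_left hdiv (sq_nonneg (x - μ))
      have e1 : -(x - μ) ^ 2 / (2 * s ^ 2) = -((x - μ) ^ 2 * (1 / (2 * s ^ 2))) := by ring
      have e2 : -(2 / (9 * σ ^ 2)) * (x - μ) ^ 2 = -((x - μ) ^ 2 * (2 / (9 * σ ^ 2))) := by
        ring
      rw [e1, e2]
      exact neg_le_neg this
    have hnorm : ‖F' s x‖ = |f x| * c * (|(x - μ) ^ 2 / s ^ 4 - 1 / s ^ 2| *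
        Real.exp (-(x - μ) ^ 2 / (2 * s ^ 2))) := by
      simp only [hF'_def]
      rw [Real.norm_eq_abs, abs_mul, abs_mul, abs_mul,
        abs_of_pos hc, abs_of_pos (Real.exp_pos _)]
    rw [hnorm]
    calc |f x| * c * (|(x - μ) ^ 2 / s ^ 4 - 1 / s ^ 2| *
          Real.exp (-(x - μ) ^ 2 / (2 * s ^ 2)))
        ≤ |f x| * c * ((A * ((x - μ) ^ 2 + 1)) *
            Real.exp (-(2 / (9 * σ ^ 2)) * (x - μ) ^ 2)) := by
          refine mul_le_mul_of_nonneg_left ?_ (by positivity)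
          exact mul_le_mul hD hE (Real.exp_pos _).le (by positivity)
      _ = bound x := by rw [hbound_def]; ring
  have hbound_int : Integrable bound := by
    have hint : Integrable fun y : ℝ => (|f (y + μ)| * (c * A) * (y ^ 2 + 1)) *
        Real.exp (-(2 / (9 * σ ^ 2)) * y ^ 2) := by
      refine integrable_mul_gauss (by positivity)
        (by fun_prop : Continuous fun y : ℝ => |f (y + μ)| * (c * A) * (y ^ 2 + 1))
        (1 + |μ|) (C * (1 + 2 ^ n₀) * (c * A) * 2) (n₀ + 2) fun y hy => ?_
      have h6 : (1:ℝ) ≤ |y| := by linarith [abs_nonneg μ]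
      have hy2 : y ^ 2 + 1 ≤ 2 * y ^ 2 := by nlinarith [sq_abs y, mul_le_mul h6 h6 zero_le_one (abs_nonneg y)]
      have hpowsplit : |y| ^ (n₀ + 2) = |y| ^ n₀ * y ^ 2 := by
        rw [pow_add, sq_abs]
      rw [abs_of_nonneg (by positivity)]
      calc |f (y + μ)| * (c * A) * (y ^ 2 + 1)
          ≤ (C * (1 + 2 ^ n₀) * |y| ^ n₀) * (c * A) * (2 * y ^ 2) := by
            refine mul_le_mul (mul_le_mul_of_nonneg_right (key y hy) (by positivity))
              hy2 (by positivity) (by positivity)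
        _ = C * (1 + 2 ^ n₀) * (c * A) * 2 * (|y| ^ n₀ * y ^ 2) := by ring
        _ = C * (1 + 2 ^ n₀) * (c * A) * 2 * |y| ^ (n₀ + 2) := by rw [hpowsplit]
    refine (hint.comp_sub_right μ).congr (Filter.Eventually.of_forall fun x => ?_)
    simp only [sub_add_cancel, hbound_def]
  -- differentiation under the integral
  have hmain := hasDerivAt_integral_of_dominated_loc_of_deriv_le
    (F := F) (F' := F') (x₀ := σ) (bound := bound) (s := Metric.ball σ (σ / 2)) (Metric.ball_mem_nhds _ (by positivity))
    (Filter.Eventually.of_forall fun s => Continuous.aestronglyMeasurable (by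
      simp only [hF_def]; fun_prop))
    hFσ_int
    (Continuous.aestronglyMeasurable (by simp only [hF'_def]; fun_prop))
    (Filter.Eventually.of_forall fun x => h_bound x)
    hbound_int
    (Filter.Eventually.of_forall fun x s hs => by
      have hs0 : 0 < s := by
        rw [Metric.mem_ball, Real.dist_eq, abs_sub_lt_iff] at hs
        linarith [hs.2]
      simpa only [hF_def, hF'_def] using
        (hasDerivAt_gauss_kernel (x - μ) hs0).const_mul (f x * c))
  rw [hmain.2.deriv]
  -- now compute the integral of F' σ
  set G : ℝ → ℝ := fun z => c * Real.exp (-z ^ 2 / 2) * (f (μ + σ * z) * (z ^ 2 - 1))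
    with hG_def
  have hGrhs : ∫ z, f (μ + σ * z) * (z ^ 2 - 1) ∂(gaussianReal 0 1) = ∫ z, G z := by
    rw [integral_gaussianReal_std]
    refine integral_congr_ae (Filter.Eventually.of_forall fun z => ?_)
    simp only [hG_def, gaussianPDFReal]
    have hc2 : c = (Real.sqrt (2 * π)) ⁻¹ := by
      rw [Real.sqrt_eq_rpow, hc_def, show -(1:ℝ)/2 = -(1/2:ℝ) by norm_num,
        Real.rpow_neg h2π.le]
    push_cast
    rw [mul_one, hc2]
    rw [show -(z - 0) ^ 2 / (2 * 1) = -z ^ 2 / 2 by ring]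
  have hFG : ∀ x : ℝ, F' σ x = σ⁻¹ * σ⁻¹ * (fun y => G (y / σ)) (x - μ) := by
    intro x
    simp only [hF'_def, hG_def]
    rw [show μ + σ * ((x - μ) / σ) = x by
      rw [mul_comm σ ((x - μ) / σ), div_mul_cancel₀ _ hσ.ne']; ring]
    rw [show -((x - μ) / σ) ^ 2 / 2 = -(x - μ) ^ 2 / (2 * σ ^ 2) by
      rw [div_pow]; ring]
    field_simp
  calc ∫ x, F' σ x = ∫ x, σ⁻¹ * σ⁻¹ * (fun y => G (y / σ)) (x - μ) := by
        exact integral_congr_ae (Filter.Eventually.of_forall fun x => hFG x)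
    _ = σ⁻¹ * σ⁻¹ * ∫ x, (fun y => G (y / σ)) (x - μ) := by
        rw [integral_const_mul]
    _ = σ⁻¹ * σ⁻¹ * ∫ x, G (x / σ) := by
        rw [integral_sub_right_eq_self (fun y => G (y / σ)) μ]
    _ = σ⁻¹ * σ⁻¹ * (|σ| • ∫ z, G z) := by
        rw [MeasureTheory.Measure.integral_comp_div G σ]
    _ = (∫ z, G z) / σ := by
        rw [abs_of_pos hσ, smul_eq_mul]
        field_simp
    _ = (∫ z, f (μ + σ * z) * (z ^ 2 - 1) ∂(gaussianReal 0 1)) / σ := by rw [hGrhs]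
end

section
/- In the Black-Scholes model with X_T = X₀ exp((r - σ²/2)T + σ√T Z), Z ~ N(0,1), the Gamma satisfies Γ = e^{-rT} (K/(X₀² σ √T)) E[Z 1_{X_T > K}]. -/
/-! With `a = (r - σ²/2)T` and `b = σ√T`, for `x > 0` the payoff is positive exactly when `Z`
exceeds the threshold `c(x) = (log (K/x) - a)/b`, so the undiscounted price is
`x ∫_{c(x)}^∞ e^{a+bz} φ(z) dz - K ∫_{c(x)}^∞ φ(z) dz`. In its derivative the boundary terms cancel
because `x e^{a+b c(x)} = K`, leaving `∫_{c(x)}^∞ e^{a+bz} φ(z) dz`, whose derivative is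
`K φ(c(x)) / (b x²)`. Finally `E[Z 1_{Z > c}] = φ(c)` since `φ' = -z φ`. -/

open MeasureTheory ProbabilityTheory Real Filter Set Topology

local notation "φ" => gaussianPDFReal 0 1

theorem hasDerivAt_integral_Ioi {ψ : ℝ → ℝ} (hi : Integrable ψ) (hc : Continuous ψ) (c : ℝ) :
    HasDerivAt (fun c => ∫ z in Ioi c, ψ z) (-ψ c) c := by
  have hsplit :
      (fun c => ∫ z in Ioi c, ψ z) = fun c => (∫ z in c..0, ψ z) + ∫ z in Ioi 0, ψ z :=
    funext fun c =>
      (intervalIntegral.integral_interval_add_Ioi hi.integrableOn hi.integrableOn).symm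
  rw [hsplit]
  exact (intervalIntegral.integral_hasDerivAt_left hi.intervalIntegrable
    hc.aestronglyMeasurable.stronglyMeasurableAtFilter hc.continuousAt).add_const _

@[fun_prop]
theorem continuous_gaussianPDFReal (μ : ℝ) (v : NNReal) : Continuous (gaussianPDFReal μ v) := by
  rw [gaussianPDFReal_def]; fun_prop

theorem exp_mul_mul_gaussianPDFReal (b z : ℝ) :
    exp (b * z) * φ z = exp (b ^ 2 / 2) * gaussianPDFReal b 1 z := by
  simp only [gaussianPDFReal_def]
  rw [mul_left_comm, ← exp_add, mul_left_comm, ← exp_add]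
  congr 2
  push_cast
  ring

theorem integrable_exp_mul_gaussianPDFReal (a b : ℝ) :
    Integrable fun z => exp (a + b * z) * φ z := by
  simp only [exp_add, mul_assoc, exp_mul_mul_gaussianPDFReal]
  exact ((integrable_gaussianPDFReal b 1).const_mul _).const_mul _

theorem gaussianPDFReal_zero_one_eq :
    φ = fun z => (√(2 * π))⁻¹ * exp (-(1 / 2) * z ^ 2) := by
  ext z
  simp only [gaussianPDFReal_def, NNReal.coe_one, mul_one, sub_zero]
  congr 2
  ring

theorem integrable_mul_gaussianPDFReal : Integrable fun z => z * φ z := by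
  simp only [gaussianPDFReal_zero_one_eq, mul_left_comm _ (√(2 * π))⁻¹]
  exact (integrable_mul_exp_neg_mul_sq one_half_pos).const_mul _

theorem hasDerivAt_gaussianPDFReal (z : ℝ) : HasDerivAt φ (-(z * φ z)) z := by
  rw [gaussianPDFReal_zero_one_eq]
  refine ((((hasDerivAt_pow 2 z).const_mul (-(1 / 2))).exp).const_mul _).congr_deriv ?_
  beta_reduce
  ring

theorem tendsto_gaussianPDFReal_atTop : Tendsto φ atTop (𝓝 0) := by
  rw [gaussianPDFReal_zero_one_eq, ← mul_zero (√(2 * π))⁻¹]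
  exact (tendsto_exp_atBot.comp ((tendsto_pow_atTop two_ne_zero).const_mul_atTop_of_neg
    (by norm_num))).const_mul _

theorem integral_Ioi_mul_gaussianPDFReal (d : ℝ) : ∫ z in Ioi d, z * φ z = φ d := by
  have hderiv (z : ℝ) : HasDerivAt (fun z => -φ z) (z * φ z) z := by
    simpa using (hasDerivAt_gaussianPDFReal z).fun_neg
  have := integral_Ioi_of_hasDerivAt_of_tendsto' (a := d) (fun z _ => hderiv z)
    integrable_mul_gaussianPDFReal.integrableOn tendsto_gaussianPDFReal_atTop.neg
  rwa [neg_zero, zero_sub, neg_neg] at this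

section BlackScholes

variable {a b K x : ℝ}

noncomputable def callThreshold (a b K x : ℝ) : ℝ := (log (K / x) - a) / b

theorem mul_exp_callThreshold (hb : b ≠ 0) (hK : 0 < K) (hx : 0 < x) :
    x * exp (a + b * callThreshold a b K x) = K := by
  rw [callThreshold, mul_div_cancel₀ _ hb, add_sub_cancel, exp_log (div_pos hK hx),
    mul_div_cancel₀ _ hx.ne']

theorem lt_mul_exp_iff_callThreshold_lt (hb : 0 < b) (hK : 0 < K) (hx : 0 < x) (z : ℝ) :
    K < x * exp (a + b * z) ↔ callThreshold a b K x < z := by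
  conv_lhs => rw [← mul_exp_callThreshold (a := a) hb.ne' hK hx]
  rw [mul_lt_mul_iff_right₀ hx, exp_lt_exp, add_lt_add_iff_left, mul_lt_mul_iff_right₀ hb]

theorem hasDerivAt_callThreshold (hK : K ≠ 0) (hx : x ≠ 0) :
    HasDerivAt (callThreshold a b K) (-(b * x)⁻¹) x := by
  have := ((((hasDerivAt_inv hx).const_mul K).log (by simp [hK, hx])).sub_const a).div_const b
  refine this.congr_deriv ?_
  field_simp

theorem integral_call_payoff (hb : 0 < b) (hK : 0 < K) (hx : 0 < x) :
    ∫ z, max (x * exp (a + b * z) - K) 0 ∂(gaussianReal 0 1)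
      = x * (∫ z in Ioi (callThreshold a b K x), exp (a + b * z) * φ z)
        - K * ∫ z in Ioi (callThreshold a b K x), φ z := by
  have hpayoff (z : ℝ) : φ z * max (x * exp (a + b * z) - K) 0
      = (Ioi (callThreshold a b K x)).indicator
          (fun z => x * (exp (a + b * z) * φ z) - K * φ z) z := by
    by_cases h : callThreshold a b K x < z
    · have := (lt_mul_exp_iff_callThreshold_lt hb hK hx z).mpr h
      rw [indicator_of_mem (mem_Ioi.mpr h), max_eq_left (by linarith)]
      ring
    · have := (lt_mul_exp_iff_callThreshold_lt hb hK hx z).not.mpr h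
      rw [indicator_of_notMem (notMem_Ioi.mpr (not_lt.mp h)), max_eq_right (by linarith), mul_zero]
  simp_rw [integral_gaussianReal_eq_integral_smul one_ne_zero, smul_eq_mul, hpayoff,
    integral_indicator measurableSet_Ioi]
  rw [integral_sub, integral_const_mul, integral_const_mul]
  · exact ((integrable_exp_mul_gaussianPDFReal a b).const_mul x).integrableOn
  · exact ((integrable_gaussianPDFReal 0 1).const_mul K).integrableOn

theorem integral_ite_lt_mul_exp (hb : 0 < b) (hK : 0 < K) (hx : 0 < x) :
    ∫ z, (if K < x * exp (a + b * z) then z else 0) ∂(gaussianReal 0 1)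
      = φ (callThreshold a b K x) := by
  simp_rw [integral_gaussianReal_eq_integral_smul one_ne_zero, smul_eq_mul,
    lt_mul_exp_iff_callThreshold_lt hb hK hx, mul_ite, mul_zero, mul_comm (φ _)]
  rw [← integral_Ioi_mul_gaussianPDFReal, ← integral_indicator measurableSet_Ioi]
  rfl

theorem hasDerivAt_integral_Ioi_callThreshold (hb : b ≠ 0) (hK : 0 < K) (hx : 0 < x) :
    HasDerivAt (fun x => ∫ z in Ioi (callThreshold a b K x), exp (a + b * z) * φ z)
      (K / (b * x ^ 2) * φ (callThreshold a b K x)) x := by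
  refine ((hasDerivAt_integral_Ioi (integrable_exp_mul_gaussianPDFReal a b) (by fun_prop) _).comp x
    (hasDerivAt_callThreshold hK.ne' hx.ne')).congr_deriv ?_
  field_simp
  linear_combination φ (callThreshold a b K x) * mul_exp_callThreshold (a := a) hb hK hx

theorem hasDerivAt_integral_call_payoff (hb : 0 < b) (hK : 0 < K) (hx : 0 < x) :
    HasDerivAt (fun x => ∫ z, max (x * exp (a + b * z) - K) 0 ∂(gaussianReal 0 1))
      (∫ z in Ioi (callThreshold a b K x), exp (a + b * z) * φ z) x := by
  have hc := hasDerivAt_callThreshold (a := a) (b := b) hK.ne' hx.ne'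
  have hG := (hasDerivAt_integral_Ioi (integrable_exp_mul_gaussianPDFReal a b) (by fun_prop)
    (callThreshold a b K x)).comp x hc
  have hA := (hasDerivAt_integral_Ioi (integrable_gaussianPDFReal 0 1) (by fun_prop)
    (callThreshold a b K x)).comp x hc
  refine ((((hasDerivAt_id x).mul hG).sub (hA.const_mul K)).congr_of_eventuallyEq ?_).congr_deriv
    ?_
  · filter_upwards [Ioi_mem_nhds hx] with y hy using integral_call_payoff hb hK hy
  · simp only [Function.comp_apply, id, one_mul]
    linear_combination
      (φ (callThreshold a b K x) * (b * x)⁻¹) * mul_exp_callThreshold (a := a) hb.ne' hK hx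

end BlackScholes

/-- Likelihood-ratio–pathwise Gamma in the Black-Scholes model:
with `X_T = X₀ exp((r-σ²/2)T + σ√T Z)` and
`V(x) = e^{-rT} E[(X_T(x) - K)⁺]`, one has
`V''(X₀) = e^{-rT} K/(X₀²σ√T) · E[Z 1_{X_T > K}]`. -/
theorem stmt_18 (X₀ K σ T r : ℝ) (hX₀ : 0 < X₀) (hK : 0 < K) (hσ : 0 < σ)
    (hT : 0 < T) :
    iteratedDeriv 2
      (fun x : ℝ => Real.exp (-r * T) * ∫ z,
        max (x * Real.exp ((r - σ ^ 2 / 2) * T + σ * Real.sqrt T * z) - K) 0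
        ∂(gaussianReal 0 1)) X₀
    = Real.exp (-r * T) * K / (X₀ ^ 2 * σ * Real.sqrt T) *
        ∫ z, (if K < X₀ * Real.exp ((r - σ ^ 2 / 2) * T + σ * Real.sqrt T * z)
          then z else 0) ∂(gaussianReal 0 1) := by
  have hb : 0 < σ * √T := mul_pos hσ (sqrt_pos.mpr hT)
  have hdelta : deriv (fun x : ℝ => exp (-r * T) * ∫ z,
        max (x * exp ((r - σ ^ 2 / 2) * T + σ * √T * z) - K) 0 ∂(gaussianReal 0 1))
      =ᶠ[𝓝 X₀] fun x => exp (-r * T) *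
        ∫ z in Ioi (callThreshold ((r - σ ^ 2 / 2) * T) (σ * √T) K x),
          exp ((r - σ ^ 2 / 2) * T + σ * √T * z) * φ z := by
    filter_upwards [Ioi_mem_nhds hX₀] with x hx
    exact ((hasDerivAt_integral_call_payoff hb hK hx).const_mul _).deriv
  rw [iteratedDeriv_succ, iteratedDeriv_one, hdelta.deriv_eq,
    ((hasDerivAt_integral_Ioi_callThreshold hb.ne' hK hX₀).const_mul _).deriv,
    integral_ite_lt_mul_exp hb hK hX₀]
  ring
end

section
/- In the Black-Scholes model, the Malliavin/likelihood-ratio Gamma weight identity holds: e^{-rT} E[(X_T-K)⁺ ((Z²-1)/(X₀²σ²T) - Z/(X₀²σ√T))] equals ∂²/∂X₀² of e^{-rT}E[(X_T-K)⁺], where X_T = X₀ exp((r-σ²/2)T + σ√T Z). -/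
open MeasureTheory ProbabilityTheory Real

/-!
Substituting `x = exp (s c)` turns `x ↦ E[f (x exp (m + s Z))]` into the Gaussian smoothing
`c ↦ ∫ g u * φ (u - c) du` of `g u = f (exp (m + s u))`, evaluated at `c = log x / s`, so the
non-smooth payoff is never differentiated. Differentiating in `c` under the integral moves the
derivatives onto the density, `∂_c φ (u - c) = (u - c) φ (u - c)` and
`∂_c ((u - c) φ (u - c)) = ((u - c)² - 1) φ (u - c)`, which is legitimate because `g` grows at
most exponentially while `(t² + 1) φ t` decays like `exp (-t² / 8)` locally uniformly in `c`.
The chain rule through `c = log x / s` then gives the likelihood-ratio weight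
`((Z² - 1) / s² - Z / s) / x²`.
-/

local notation "φ" => gaussianPDFReal 0 1

lemma gaussianPDFReal_zero_one_apply (t : ℝ) : φ t = (√(2 * π))⁻¹ * exp (-t ^ 2 / 2) := by
  simp [gaussianPDFReal]

lemma gaussianPDFReal_zero_one_le (t : ℝ) : φ t ≤ exp (-t ^ 2 / 2) := by
  have h : 1 ≤ √(2 * π) := one_le_sqrt.2 (by linarith [pi_gt_three])
  rw [gaussianPDFReal_zero_one_apply]
  exact mul_le_of_le_one_left (exp_nonneg _) (inv_le_one_of_one_le₀ h)

lemma hasDerivAt_gaussianPDFReal_zero_one (t : ℝ) : HasDerivAt φ (-(t * φ t)) t := by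
  have h : HasDerivAt (fun t : ℝ => -t ^ 2 / 2) (-t) t :=
    ((hasDerivAt_pow 2 t).fun_neg.div_const 2).congr_deriv (by norm_num; ring)
  rw [show φ = fun t => (√(2 * π))⁻¹ * exp (-t ^ 2 / 2) from
    funext gaussianPDFReal_zero_one_apply]
  exact (h.exp.const_mul _).congr_deriv (by dsimp only; ring)

lemma sq_add_one_mul_exp_le (t : ℝ) :
    (t ^ 2 + 1) * exp (-t ^ 2 / 2) ≤ 4 * exp (-t ^ 2 / 4) := by
  have h : t ^ 2 + 1 ≤ 4 * exp (t ^ 2 / 4) := by linarith [add_one_le_exp (t ^ 2 / 4)]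
  calc (t ^ 2 + 1) * exp (-t ^ 2 / 2) ≤ 4 * exp (t ^ 2 / 4) * exp (-t ^ 2 / 2) := by gcongr
    _ = 4 * exp (-t ^ 2 / 4) := by rw [mul_assoc, ← exp_add]; ring_nf

lemma sq_add_one_mul_gaussianPDFReal_le {t t' : ℝ} (h : |t' - t| ≤ 1) :
    (t' ^ 2 + 1) * φ t' ≤ 4 * exp (1 / 4 - t ^ 2 / 8) := by
  have ht : t ^ 2 ≤ 2 * t' ^ 2 + 2 := by
    have h1 : (t' - t) ^ 2 ≤ 1 := (sq_le_one_iff_abs_le_one _).2 h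
    nlinarith [sq_nonneg (2 * t' - t)]
  calc (t' ^ 2 + 1) * φ t' ≤ (t' ^ 2 + 1) * exp (-t' ^ 2 / 2) := by
        gcongr; exact gaussianPDFReal_zero_one_le t'
    _ ≤ 4 * exp (-t' ^ 2 / 4) := sq_add_one_mul_exp_le t'
    _ ≤ 4 * exp (1 / 4 - t ^ 2 / 8) := by gcongr; linarith

lemma integrable_exp_mul_abs_sub_sq (d c : ℝ) :
    Integrable fun u : ℝ => exp (d * |u - c| - (u - c) ^ 2 / 8) := by
  refine Integrable.comp_sub_right (f := fun t => exp (d * |t| - t ^ 2 / 8)) ?_ c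
  refine ((integrable_exp_neg_mul_sq (b := 1 / 16) (by norm_num)).const_mul (exp (4 * d ^ 2))).mono'
    (by fun_prop) (ae_of_all _ fun t => ?_)
  rw [norm_of_nonneg (exp_nonneg _), ← exp_add]
  gcongr
  nlinarith [sq_nonneg (|t| / 4 - 2 * |d|), abs_mul_abs_self t, le_abs_self d, abs_nonneg t,
    mul_le_mul_of_nonneg_right (le_abs_self d) (abs_nonneg t), sq_abs d]

lemma abs_mul_gaussianPDFReal_le_of_abs_le {a t : ℝ} (h : |a| ≤ t ^ 2 + 1) :
    |a * φ t| ≤ (t ^ 2 + 1) * φ t := by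
  rw [abs_mul, abs_of_nonneg (gaussianPDFReal_nonneg 0 1 t)]
  exact mul_le_mul_of_nonneg_right h (gaussianPDFReal_nonneg 0 1 t)

lemma abs_gaussianPDFReal_le (t : ℝ) : |φ t| ≤ (t ^ 2 + 1) * φ t := by
  simpa using abs_mul_gaussianPDFReal_le_of_abs_le (a := 1) (t := t)
    (by rw [abs_one]; linarith [sq_nonneg t])

lemma abs_mul_gaussianPDFReal_le (t : ℝ) : |t * φ t| ≤ (t ^ 2 + 1) * φ t :=
  abs_mul_gaussianPDFReal_le_of_abs_le (by nlinarith [abs_mul_abs_self t, sq_nonneg (|t| - 1)])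

lemma abs_sq_sub_one_mul_gaussianPDFReal_le (t : ℝ) :
    |(t ^ 2 - 1) * φ t| ≤ (t ^ 2 + 1) * φ t :=
  abs_mul_gaussianPDFReal_le_of_abs_le (abs_le.2 ⟨by nlinarith [sq_nonneg t], by linarith⟩)

section GaussianSmoothing

variable {g w v : ℝ → ℝ} {A B : ℝ}

lemma abs_mul_comp_sub_le (hgb : ∀ u, |g u| ≤ A * exp (B * |u|))
    (hwb : ∀ t, |w t| ≤ (t ^ 2 + 1) * φ t) {c c' : ℝ} (hc : |c' - c| ≤ 1) (u : ℝ) :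
    |g u * w (u - c')|
      ≤ 4 * A * exp (1 / 4 + |B| * |c|) * exp (|B| * |u - c| - (u - c) ^ 2 / 8) := by
  have hA : 0 ≤ A := (mul_nonneg_iff_of_pos_right (exp_pos _)).1 ((abs_nonneg _).trans (hgb u))
  have hB : B * |u| ≤ |B| * |c| + |B| * |u - c| := by
    calc B * |u| ≤ |B| * |c + (u - c)| := by
          rw [add_sub_cancel]; exact mul_le_mul_of_nonneg_right (le_abs_self B) (abs_nonneg u)
      _ ≤ |B| * (|c| + |u - c|) := by gcongr; exact abs_add_le _ _
      _ = |B| * |c| + |B| * |u - c| := mul_add _ _ _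
  have hw : |w (u - c')| ≤ 4 * exp (1 / 4 - (u - c) ^ 2 / 8) := by
    refine (hwb _).trans (sq_add_one_mul_gaussianPDFReal_le ?_)
    rwa [show u - c' - (u - c) = -(c' - c) by ring, abs_neg]
  calc |g u * w (u - c')| = |g u| * |w (u - c')| := abs_mul _ _
    _ ≤ A * exp (B * |u|) * (4 * exp (1 / 4 - (u - c) ^ 2 / 8)) :=
        mul_le_mul (hgb u) hw (abs_nonneg _) (by positivity)
    _ ≤ A * exp (|B| * |c| + |B| * |u - c|) * (4 * exp (1 / 4 - (u - c) ^ 2 / 8)) := by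
        gcongr
    _ = 4 * A * (exp (|B| * |c| + |B| * |u - c|) * exp (1 / 4 - (u - c) ^ 2 / 8)) := by ring
    _ = 4 * A * exp (1 / 4 + |B| * |c|) * exp (|B| * |u - c| - (u - c) ^ 2 / 8) := by
        rw [mul_assoc _ (exp _), ← exp_add, ← exp_add]
        ring_nf

lemma integrable_mul_comp_sub (hg : AEStronglyMeasurable g)
    (hgb : ∀ u, |g u| ≤ A * exp (B * |u|))
    (hw : Measurable w) (hwb : ∀ t, |w t| ≤ (t ^ 2 + 1) * φ t) (c : ℝ) :
    Integrable fun u => g u * w (u - c) :=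
  ((integrable_exp_mul_abs_sub_sq _ c).const_mul _).mono'
    (hg.mul (hw.comp (measurable_sub_const c)).aestronglyMeasurable)
    (ae_of_all _ fun u => abs_mul_comp_sub_le hgb hwb (by simp) u)

lemma hasDerivAt_integral_mul_comp_sub (hg : AEStronglyMeasurable g)
    (hgb : ∀ u, |g u| ≤ A * exp (B * |u|)) (hw : ∀ t, HasDerivAt w (-v t) t)
    (hv : Measurable v) (hwb : ∀ t, |w t| ≤ (t ^ 2 + 1) * φ t)
    (hvb : ∀ t, |v t| ≤ (t ^ 2 + 1) * φ t) (c : ℝ) :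
    HasDerivAt (fun c => ∫ u, g u * w (u - c)) (∫ u, g u * v (u - c)) c := by
  have hw_meas : Measurable w :=
    (continuous_iff_continuousAt.2 fun t => (hw t).continuousAt).measurable
  refine (hasDerivAt_integral_of_dominated_loc_of_deriv_le (F' := fun c u => g u * v (u - c))
    (Metric.ball_mem_nhds c one_pos)
    (.of_forall fun c' => (integrable_mul_comp_sub hg hgb hw_meas hwb c').aestronglyMeasurable)
    (integrable_mul_comp_sub hg hgb hw_meas hwb c)
    (integrable_mul_comp_sub hg hgb hv hvb c).aestronglyMeasurable
    (ae_of_all _ fun u c' hc' => abs_mul_comp_sub_le hgb hvb ?_ u)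
    ((integrable_exp_mul_abs_sub_sq _ c).const_mul _)
    (ae_of_all _ fun u c' _ => ?_)).2
  · rw [Metric.mem_ball, Real.dist_eq] at hc'
    exact hc'.le
  · exact (((hw (u - c')).comp c' ((hasDerivAt_id c').const_sub u)).const_mul (g u)).congr_deriv
      (by ring)

lemma hasDerivAt_integral_mul_gaussianPDFReal_comp_sub (hg : AEStronglyMeasurable g)
    (hgb : ∀ u, |g u| ≤ A * exp (B * |u|)) (c : ℝ) :
    HasDerivAt (fun c => ∫ u, g u * φ (u - c)) (∫ u, g u * ((u - c) * φ (u - c))) c :=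
  hasDerivAt_integral_mul_comp_sub hg hgb hasDerivAt_gaussianPDFReal_zero_one (by fun_prop)
    abs_gaussianPDFReal_le abs_mul_gaussianPDFReal_le c

lemma hasDerivAt_integral_mul_mul_gaussianPDFReal_comp_sub (hg : AEStronglyMeasurable g)
    (hgb : ∀ u, |g u| ≤ A * exp (B * |u|)) (c : ℝ) :
    HasDerivAt (fun c => ∫ u, g u * ((u - c) * φ (u - c)))
      (∫ u, g u * (((u - c) ^ 2 - 1) * φ (u - c))) c := by
  refine hasDerivAt_integral_mul_comp_sub hg hgb (fun t => ?_) (by fun_prop)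
    abs_mul_gaussianPDFReal_le abs_sq_sub_one_mul_gaussianPDFReal_le c
  exact ((hasDerivAt_id t).mul (hasDerivAt_gaussianPDFReal_zero_one t)).congr_deriv (by simp; ring)

end GaussianSmoothing

lemma integral_gaussianReal_eq_integral_comp_sub (F : ℝ → ℝ) (c : ℝ) :
    ∫ z, F z ∂gaussianReal 0 1 = ∫ u, F (u - c) * φ (u - c) := by
  rw [integral_gaussianReal_eq_integral_smul one_ne_zero,
    ← integral_sub_right_eq_self (fun u => φ u • F u) c]
  simp only [smul_eq_mul, mul_comm]

section Payoff

variable {f : ℝ → ℝ} {A m s x : ℝ}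

lemma mul_exp_sub_log_div (hs : s ≠ 0) (hx : 0 < x) (u : ℝ) :
    x * exp (m + s * (u - log x / s)) = exp (m + s * u) := by
  rw [mul_sub, mul_div_cancel₀ _ hs, ← add_sub_assoc, exp_sub, exp_log hx]
  field_simp

lemma abs_comp_exp_le (hfb : ∀ y, |f y| ≤ A * (1 + |y|)) (u : ℝ) :
    |f (exp (m + s * u))| ≤ 2 * A * exp |m| * exp (|s| * |u|) := by
  have hA : 0 ≤ A := by simpa using (abs_nonneg _).trans (hfb 0)
  have h : exp (m + s * u) ≤ exp (|m| + |s| * |u|) :=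
    exp_le_exp.2 (add_le_add (le_abs_self m) ((le_abs_self _).trans (abs_mul s u).le))
  have h1 : 1 ≤ exp (|m| + |s| * |u|) := one_le_exp (by positivity)
  calc |f (exp (m + s * u))| ≤ A * (1 + exp (m + s * u)) := by
        simpa [abs_of_pos (exp_pos _)] using hfb (exp (m + s * u))
    _ ≤ A * (2 * exp (|m| + |s| * |u|)) := by gcongr; linarith
    _ = 2 * A * exp |m| * exp (|s| * |u|) := by rw [exp_add]; ring

theorem iteratedDeriv_two_integral_comp_mul_exp (hf : Measurable f)
    (hfb : ∀ y, |f y| ≤ A * (1 + |y|)) (hs : s ≠ 0) (hx : 0 < x) :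
    iteratedDeriv 2 (fun x => ∫ z, f (x * exp (m + s * z)) ∂gaussianReal 0 1) x =
      ∫ z, f (x * exp (m + s * z)) * ((z ^ 2 - 1) / (x ^ 2 * s ^ 2) - z / (x ^ 2 * s))
        ∂gaussianReal 0 1 := by
  set g := fun u => f (exp (m + s * u))
  have hg : AEStronglyMeasurable g := (hf.comp (by fun_prop)).aestronglyMeasurable
  have hgb : ∀ u, |g u| ≤ 2 * A * exp |m| * exp (|s| * |u|) := abs_comp_exp_le hfb
  set G₀ := fun c => ∫ u, g u * φ (u - c)
  set G₁ := fun c => ∫ u, g u * ((u - c) * φ (u - c))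
  set G₂ := fun c => ∫ u, g u * (((u - c) ^ 2 - 1) * φ (u - c))
  have hG₀ : ∀ c, HasDerivAt G₀ (G₁ c) c :=
    hasDerivAt_integral_mul_gaussianPDFReal_comp_sub hg hgb
  have hG₁ : ∀ c, HasDerivAt G₁ (G₂ c) c :=
    hasDerivAt_integral_mul_mul_gaussianPDFReal_comp_sub hg hgb
  set L := fun y => log y / s
  have hL : ∀ y, 0 < y → HasDerivAt L (y⁻¹ / s) y := fun y hy =>
    (hasDerivAt_log hy.ne').div_const s
  have hV :
      (fun x => ∫ z, f (x * exp (m + s * z)) ∂gaussianReal 0 1) =ᶠ[nhds x] G₀ ∘ L := by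
    filter_upwards [eventually_gt_nhds hx] with y hy
    rw [integral_gaussianReal_eq_integral_comp_sub _ (L y)]
    simp only [Function.comp, G₀, L, mul_exp_sub_log_div hs hy, g]
  have hV' : deriv (G₀ ∘ L) =ᶠ[nhds x] fun y => G₁ (L y) * (y⁻¹ / s) := by
    filter_upwards [eventually_gt_nhds hx] with y hy
    exact ((hG₀ _).comp y (hL y hy)).deriv
  have hV'' : HasDerivAt (fun y => G₁ (L y) * (y⁻¹ / s))
      (G₂ (L x) * (x⁻¹ / s) * (x⁻¹ / s) + G₁ (L x) * (-(x ^ 2)⁻¹ / s)) x :=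
    ((hG₁ _).comp x (hL x hx)).mul ((hasDerivAt_inv hx.ne').div_const s)
  rw [(hV.iteratedDeriv 2).eq_of_nhds, iteratedDeriv_succ, iteratedDeriv_one, hV'.deriv_eq,
    hV''.deriv, integral_gaussianReal_eq_integral_comp_sub _ (L x)]
  have hI₁ := integrable_mul_comp_sub hg hgb (by fun_prop) abs_mul_gaussianPDFReal_le (L x)
  have hI₂ :=
    integrable_mul_comp_sub hg hgb (by fun_prop) abs_sq_sub_one_mul_gaussianPDFReal_le (L x)
  rw [mul_assoc, ← integral_mul_const, ← integral_mul_const,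
    ← integral_add (hI₂.mul_const _) (hI₁.mul_const _)]
  refine integral_congr_ae (ae_of_all _ fun u => ?_)
  simp only [g, L, mul_exp_sub_log_div hs hx]
  field_simp
  ring

end Payoff

lemma abs_max_sub_zero_le (K y : ℝ) : |max (y - K) 0| ≤ (1 + |K|) * (1 + |y|) := by
  rw [abs_of_nonneg (le_max_right _ _)]
  exact max_le (by nlinarith [le_abs_self y, neg_abs_le K, abs_nonneg y, abs_nonneg K])
    (by positivity)

theorem stmt_19_general (X₀ K σ T r : ℝ) (hX₀ : 0 < X₀) (hσ : 0 < σ)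
    (hT : 0 < T) :
    iteratedDeriv 2
      (fun x : ℝ => Real.exp (-r * T) * ∫ z,
        max (x * Real.exp ((r - σ ^ 2 / 2) * T + σ * Real.sqrt T * z) - K) 0
        ∂(gaussianReal 0 1)) X₀
    = Real.exp (-r * T) * ∫ z,
        max (X₀ * Real.exp ((r - σ ^ 2 / 2) * T + σ * Real.sqrt T * z) - K) 0
          * ((z ^ 2 - 1) / (X₀ ^ 2 * σ ^ 2 * T)
            - z / (X₀ ^ 2 * σ * Real.sqrt T)) ∂(gaussianReal 0 1) := by
  have hs : σ * √T ≠ 0 := by positivity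
  rw [iteratedDeriv_const_mul_field, iteratedDeriv_two_integral_comp_mul_exp (by fun_prop)
    (abs_max_sub_zero_le K) hs hX₀, mul_pow, sq_sqrt hT.le, ← mul_assoc, ← mul_assoc]

/-- Malliavin / likelihood-ratio Gamma weight identity in the Black-Scholes
model: with `X_T = X₀ exp((r-σ²/2)T + σ√T Z)` and
`V(x) = e^{-rT} E[(X_T(x) - K)⁺]`,
`V''(X₀) = e^{-rT} E[(X_T-K)⁺ ((Z²-1)/(X₀²σ²T) - Z/(X₀²σ√T))]`. -/
theorem stmt_19 (X₀ K σ T r : ℝ) (hX₀ : 0 < X₀) (hK : 0 < K) (hσ : 0 < σ)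
    (hT : 0 < T) :
    iteratedDeriv 2
      (fun x : ℝ => Real.exp (-r * T) * ∫ z,
        max (x * Real.exp ((r - σ ^ 2 / 2) * T + σ * Real.sqrt T * z) - K) 0
        ∂(gaussianReal 0 1)) X₀
    = Real.exp (-r * T) * ∫ z,
        max (X₀ * Real.exp ((r - σ ^ 2 / 2) * T + σ * Real.sqrt T * z) - K) 0
          * ((z ^ 2 - 1) / (X₀ ^ 2 * σ ^ 2 * T)
            - z / (X₀ ^ 2 * σ * Real.sqrt T)) ∂(gaussianReal 0 1) :=
  stmt_19_general X₀ K σ T r hX₀ hσ hT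
end
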